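/- arXiv:1912.00236 — 3 statements merged into one kernel-verified Lean document; each statement's English description precedes it below -/
import Mathlib

section
/- For any strictly increasing sequence of natural numbers u_1 < u_2 < ... < u_n, the number of Gelfand–Tsetlin patterns with bottom row (u_1,...,u_n) equals the product over all 1 ≤ i < j ≤ n of (u_j - u_i)/(j - i). -/
/-!
Deleting the bottom row of a pattern with bottom row `u` leaves a pattern whose bottom row `v`
interlaces `u`, i.e. `u j ≤ v j < u (j + 1)`; hence `GTP(u) = ∑ GTP(v)` over this box of rows `v`.
For monotone `u` the determinant `det (u j).choose i` satisfies the same recursion: by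
multilinearity in the rows and the hockey-stick identity
`∑_{u j ≤ t < u (j+1)} t.choose i = (u (j+1)).choose (i+1) - (u j).choose (i+1)`, the sum of the
determinants is the minor left after subtracting each row of `(u j).choose i` from the next one.
So `GTP(u) = det (u j).choose i`. Scaling column `i` by `i!` turns `x.choose i` into the falling
factorial, a monic polynomial of degree `i` in `x`, so `∏ i! * det = ∏_{i<j} (u j - u i)`; at
`u = id` the matrix is unitriangular, so `∏ i! = ∏_{i<j} (j - i)`.
-/

open Finset

/-- A Gelfand–Tsetlin pattern with `n` rows: row `i` (for `i : Fin n`) has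
entries `entry i 0, …, entry i i`, rows interlace, and entries beyond the
row length are normalized to `0`. -/
structure GTPattern (n : ℕ) where
  entry : Fin n → ℕ → ℕ
  interlace : ∀ i : Fin n, ∀ h : i.1 + 1 < n, ∀ j : ℕ, j ≤ i.1 →
    entry ⟨i.1 + 1, h⟩ j ≤ entry i j ∧ entry i j < entry ⟨i.1 + 1, h⟩ (j + 1)
  support : ∀ i : Fin n, ∀ j : ℕ, i.1 < j → entry i j = 0

/-- The number of Gelfand–Tsetlin patterns with `n` rows and bottom row `u`. -/
noncomputable def GTPcount (n : ℕ) (u : Fin n → ℕ) : ℕ :=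
  Nat.card {T : GTPattern n //
    ∀ j : Fin n, T.entry ⟨n - 1, Nat.sub_lt j.pos Nat.one_pos⟩ j.1 = u j}

/-- `GTP` of a finite set: patterns whose bottom row is the increasing
enumeration of `U`. -/
noncomputable def GTPfinset (U : Finset ℕ) : ℕ :=
  GTPcount U.card (fun j => ((U.orderIsoOfFin rfl j : ℕ)))

/-- `P(A,B) = ∏_{(a,b) ∈ A×B, a<b} (b-a)`. -/
def Pprod (A B : Finset ℕ) : ℕ :=
  ∏ p ∈ (A ×ˢ B).filter (fun p => p.1 < p.2), (p.2 - p.1)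

/-- The superfactorial `sf m = 1!·2!···m!`. -/
def superfactorial : ℕ → ℕ
  | 0 => 1
  | m + 1 => superfactorial m * Nat.factorial (m + 1)

open Matrix

def interlacingRows {n : ℕ} (u : Fin (n + 1) → ℕ) : Finset (Fin n → ℕ) :=
  Fintype.piFinset fun j => Ico (u j.castSucc) (u j.succ)

lemma mem_interlacingRows {n : ℕ} {u : Fin (n + 1) → ℕ} {v : Fin n → ℕ} :
    v ∈ interlacingRows u ↔ ∀ j, u j.castSucc ≤ v j ∧ v j < u j.succ := by
  simp only [interlacingRows, Fintype.mem_piFinset, mem_Ico]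

lemma Monotone.strictMono_of_mem_interlacingRows {n : ℕ} {u : Fin (n + 1) → ℕ}
    {v : Fin n → ℕ} (hu : Monotone u) (hv : v ∈ interlacingRows u) : StrictMono v :=
  fun j k hjk =>
  calc v j < u j.succ := (mem_interlacingRows.1 hv j).2
    _ ≤ u k.castSucc := hu (Fin.succ_le_castSucc_iff.2 hjk)
    _ ≤ v k := (mem_interlacingRows.1 hv k).1

namespace GTPattern

variable {n : ℕ}

@[ext]
lemma ext {T S : GTPattern n} (h : T.entry = S.entry) : T = S := by
  cases T; cases S; cases h; rfl

instance : Subsingleton (GTPattern 0) :=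
  ⟨fun _ _ => ext (funext fun i => i.elim0)⟩

def bottomRow (T : GTPattern n) (j : Fin n) : ℕ :=
  T.entry ⟨n - 1, Nat.sub_lt j.pos Nat.one_pos⟩ j

lemma bottomRow_eq_entry_last (T : GTPattern (n + 1)) (j : Fin (n + 1)) :
    T.bottomRow j = T.entry (Fin.last n) j :=
  rfl

def dropLast (T : GTPattern (n + 1)) : GTPattern n where
  entry i := T.entry i.castSucc
  interlace i h := T.interlace i.castSucc (Nat.lt_succ_of_lt h)
  support i := T.support i.castSucc

lemma bottomRow_dropLast_mem (T : GTPattern (n + 1)) :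
    T.dropLast.bottomRow ∈ interlacingRows T.bottomRow := by
  refine mem_interlacingRows.2 fun j => ?_
  have hn : 0 < n := j.pos
  have hlast : (⟨n - 1 + 1, by omega⟩ : Fin (n + 1)) = Fin.last n := Fin.ext (by simp; omega)
  have := T.interlace ⟨n - 1, by omega⟩ (by simp; omega) j (by simp; omega)
  rwa [hlast] at this

def snoc (S : GTPattern n) (u : Fin (n + 1) → ℕ) (hu : S.bottomRow ∈ interlacingRows u) :
    GTPattern (n + 1) where
  entry i j := if h : i.1 < n then S.entry ⟨i, h⟩ j else if hj : j < n + 1 then u ⟨j, hj⟩ else 0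
  interlace i h j hj := by
    simp only at h hj ⊢
    have hi : i.1 < n := by omega
    rw [dif_pos hi]
    by_cases hnext : i.1 + 1 < n
    · rw [dif_pos hnext, dif_pos hnext]
      exact S.interlace ⟨i, hi⟩ hnext j hj
    · have hbot : (⟨i, hi⟩ : Fin n) = ⟨n - 1, by omega⟩ := Fin.ext (by simp only; omega)
      rw [dif_neg hnext, dif_neg hnext, dif_pos (by omega), dif_pos (by omega), hbot]
      exact mem_interlacingRows.1 hu ⟨j, by omega⟩
  support i j hij := by
    split_ifs with hi
    · exact S.support ⟨i, hi⟩ j hij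
    · omega
    · rfl

section snoc

variable {S : GTPattern n} {u : Fin (n + 1) → ℕ} {hu : S.bottomRow ∈ interlacingRows u}

lemma bottomRow_snoc : (S.snoc u hu).bottomRow = u :=
  funext fun j => (dif_neg (lt_irrefl n)).trans (dif_pos j.2)

lemma dropLast_snoc : (S.snoc u hu).dropLast = S := by
  ext i j
  simp [dropLast, snoc]

end snoc

lemma snoc_dropLast (T : GTPattern (n + 1)) :
    T.dropLast.snoc T.bottomRow (bottomRow_dropLast_mem T) = T := by
  ext i j
  have hlast : ¬i.1 < n → i = Fin.last n := fun hi => Fin.ext (by simp; omega)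
  simp only [snoc, dropLast]
  split_ifs with hi hj
  · rfl
  · rw [hlast hi, bottomRow_eq_entry_last]
  · exact (T.support i j (by omega)).symm

def snocEquiv (u : Fin (n + 1) → ℕ) :
    {S : GTPattern n // S.bottomRow ∈ interlacingRows u} ≃
      {T : GTPattern (n + 1) // T.bottomRow = u} where
  toFun S := ⟨S.1.snoc u S.2, bottomRow_snoc⟩
  invFun := fun ⟨T, hT⟩ => ⟨T.dropLast, hT ▸ bottomRow_dropLast_mem T⟩
  left_inv _ := Subtype.ext dropLast_snoc
  right_inv := by
    rintro ⟨T, rfl⟩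
    exact Subtype.ext (snoc_dropLast T)

def equivSigmaBottomRow (u : Fin (n + 1) → ℕ) :
    {T : GTPattern (n + 1) // T.bottomRow = u} ≃
      Σ v : interlacingRows u, {S : GTPattern n // S.bottomRow = v} :=
  (snocEquiv u).symm.trans (Equiv.sigmaSubtypeFiberEquivSubtype bottomRow fun _ => Iff.rfl).symm

instance finite_bottomRow_eq : ∀ {n : ℕ} {u : Fin n → ℕ},
    Finite {T : GTPattern n // T.bottomRow = u}
  | 0, _ => inferInstance
  | _ + 1, u =>
    have := fun v : interlacingRows u => @finite_bottomRow_eq _ v.1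
    Finite.of_equiv _ (equivSigmaBottomRow u).symm

end GTPattern

open GTPattern

lemma GTPcount_eq_card {n : ℕ} (u : Fin n → ℕ) :
    GTPcount n u = Nat.card {T : GTPattern n // T.bottomRow = u} :=
  Nat.card_congr (Equiv.subtypeEquivRight fun _ => funext_iff.symm)

lemma GTPcount_zero (u : Fin 0 → ℕ) : GTPcount 0 u = 1 := by
  rw [GTPcount_eq_card, Nat.card_eq_one_iff_unique]
  exact ⟨inferInstance, ⟨⟨⟨fun i => i.elim0, fun i => i.elim0, fun i => i.elim0⟩,
    funext fun j => j.elim0⟩⟩⟩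

lemma GTPcount_succ {n : ℕ} (u : Fin (n + 1) → ℕ) :
    GTPcount (n + 1) u = ∑ v ∈ interlacingRows u, GTPcount n v := by
  rw [GTPcount_eq_card, Nat.card_congr (equivSigmaBottomRow u), Nat.card_sigma,
    ← sum_coe_sort (interlacingRows u)]
  simp only [GTPcount_eq_card]

noncomputable def chooseMatrix (R : Type*) [CommRing R] {n : ℕ} (w : Fin n → ℕ) :
    Matrix (Fin n) (Fin n) R :=
  of fun j i => ((w j).choose i : R)

section chooseMatrix

variable {R : Type*} [CommRing R] {n : ℕ}

lemma sum_Ico_cast_choose (i : ℕ) {a b : ℕ} (hab : a ≤ b) :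
    ∑ t ∈ Ico a b, (t.choose i : R) = (b.choose (i + 1) : R) - a.choose (i + 1) := by
  rw [← sum_Ico_sub (fun t => (t.choose (i + 1) : R)) hab]
  refine sum_congr rfl fun t _ => ?_
  rw [Nat.choose_succ_succ', Nat.cast_add, add_sub_cancel_right]

lemma det_chooseMatrix_succ (u : Fin (n + 1) → ℕ) :
    det (chooseMatrix R u) =
      det (of fun j i : Fin n => ((u j.succ).choose (i + 1) : R) - (u j.castSucc).choose (i + 1)) := by
  let B : Matrix (Fin (n + 1)) (Fin (n + 1)) R :=
    of (Fin.cases (chooseMatrix R u 0) fun j => chooseMatrix R u j.succ - chooseMatrix R u j.castSucc)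
  have hB : det (chooseMatrix R u) = det B :=
    det_eq_of_forall_row_eq_smul_add_pred (fun _ => 1) (fun _ => rfl) fun j i => by simp [B]
  -- column `0` of `B` is `1, 0, …, 0`
  rw [hB, det_succ_column_zero, Fintype.sum_eq_single 0 fun k hk => ?_]
  · have hminor : B.submatrix Fin.succ Fin.succ =
        of fun j i : Fin n => ((u j.succ).choose (i + 1) : R) - (u j.castSucc).choose (i + 1) := by
      ext j i
      simp [B, chooseMatrix]
    rw [Fin.succAbove_zero, hminor]
    simp [B, chooseMatrix]
  · obtain ⟨j, rfl⟩ := Fin.exists_succ_eq.2 hk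
    simp [B, chooseMatrix]

lemma sum_det_chooseMatrix_interlacingRows {u : Fin (n + 1) → ℕ} (hu : Monotone u) :
    ∑ v ∈ interlacingRows u, det (chooseMatrix R v) = det (chooseMatrix R u) := by
  classical
  rw [det_chooseMatrix_succ]
  refine ((detRowAlternating (n := Fin n) (R := R)).map_sum_finset
    (fun _ t i => (t.choose i : R)) (fun j => Ico (u j.castSucc) (u j.succ))).symm.trans
    (congrArg det ?_)
  ext j i
  simp only [Finset.sum_apply, of_apply]
  exact sum_Ico_cast_choose i (hu (Fin.castSucc_le_succ j))

lemma prod_factorial_mul_det_chooseMatrix [IsDomain R] (w : Fin n → ℕ) :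
    (∏ i : Fin n, (i.1.factorial : R)) * det (chooseMatrix R w) =
      ∏ i, ∏ j ∈ Ioi i, ((w j : R) - w i) := by
  rw [← det_mul_row, ← det_vandermonde, det_eval_matrixOfPolynomials_eq_det_vandermonde _
    (fun i => descPochhammer R i) (fun i => descPochhammer_natDegree R i)
    (fun i => monic_descPochhammer R i)]
  congr 1
  ext j i
  simp [chooseMatrix, descPochhammer_eval_eq_descFactorial,
    Nat.descFactorial_eq_factorial_mul_choose]

lemma det_chooseMatrix_val : det (chooseMatrix R fun i : Fin n => (i : ℕ)) = 1 := by
  rw [det_of_isLowerTriangular _ fun j i hji => ?_]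
  · simp [chooseMatrix]
  · simp only [chooseMatrix, of_apply]
    rw [Nat.choose_eq_zero_of_lt (show (j : ℕ) < i from hji), Nat.cast_zero]

lemma det_chooseMatrix {K : Type*} [Field K] [CharZero K] (w : Fin n → ℕ) :
    det (chooseMatrix K w) = ∏ i, ∏ j ∈ Ioi i, ((w j : K) - w i) / ((j : ℕ) - (i : ℕ) : K) := by
  have hF : ∏ i : Fin n, (i.1.factorial : K) ≠ 0 :=
    prod_ne_zero_iff.2 fun i _ => Nat.cast_ne_zero.2 i.1.factorial_ne_zero
  have hid := prod_factorial_mul_det_chooseMatrix (R := K) fun i : Fin n => (i : ℕ)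
  rw [det_chooseMatrix_val, mul_one] at hid
  simp_rw [prod_div_distrib, ← hid, ← prod_factorial_mul_det_chooseMatrix]
  field_simp

end chooseMatrix

lemma GTPcount_eq_det_chooseMatrix (R : Type*) [CommRing R] :
    ∀ {n : ℕ} {u : Fin n → ℕ}, Monotone u → (GTPcount n u : R) = det (chooseMatrix R u)
  | 0, u, _ => by simp [GTPcount_zero]
  | n + 1, u, hu => by
    rw [GTPcount_succ, Nat.cast_sum, ← sum_det_chooseMatrix_interlacingRows hu]
    exact sum_congr rfl fun v hv =>
      GTPcount_eq_det_chooseMatrix R (hu.strictMono_of_mem_interlacingRows hv).monotone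

lemma prod_filter_lt_eq_prod_prod_Ioi {α M : Type*} [Fintype α] [LinearOrder α]
    [LocallyFiniteOrderTop α] [CommMonoid M] (f : α → α → M) :
    ∏ p ∈ univ.filter (fun p : α × α => p.1 < p.2), f p.1 p.2 = ∏ i, ∏ j ∈ Ioi i, f i j := by
  rw [prod_filter, Fintype.prod_prod_type]
  refine prod_congr rfl fun i _ => ?_
  rw [← prod_filter, filter_lt_eq_Ioi]

/-- Product formula for GTP counts. -/
theorem stmt_1 (n : ℕ) (u : Fin n → ℕ) (hu : StrictMono u) :
    (GTPcount n u : ℚ) =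
      ∏ p ∈ Finset.univ.filter (fun p : Fin n × Fin n => p.1 < p.2),
        (((u p.2 : ℚ) - (u p.1 : ℚ)) / ((p.2.1 : ℚ) - (p.1.1 : ℚ))) := by
  rw [GTPcount_eq_det_chooseMatrix ℚ hu.monotone, det_chooseMatrix,
    prod_filter_lt_eq_prod_prod_Ioi fun i j : Fin n => ((u j : ℚ) - u i) / ((j : ℕ) - (i : ℕ) : ℚ)]
end

section
/- For a strictly increasing sequence u_1 < ... < u_n of natural numbers, the product of (u_j - u_i) over all 1 ≤ i < j ≤ n is divisible by the superfactorial 1!·2!·3!···(n-1)!. -/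
/-!
Cast to `ℤ`, the product `∏_{i<j} (u_j - u_i)` is the Vandermonde determinant of `u`
(the truncated subtractions are harmless because `u` is increasing). And `1!·2!···(n-1)!`
divides every integer Vandermonde determinant of size `n`: after subtracting the entries'
minimum, the columns `x^k` can be replaced by the descending Pochhammer polynomials
`x(x-1)···(x-k+1) = k!·C(x,k)` without changing the determinant, and column `k` is then
divisible by `k!` (`Matrix.superFactorial_dvd_vandermonde_det`).
-/

open Finset

lemma superfactorial_eq_superFactorial : ∀ m : ℕ, superfactorial m = m.superFactorial
  | 0 => rfl
  | m + 1 => by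
    rw [superfactorial, Nat.superFactorial, superfactorial_eq_superFactorial m, mul_comm]

lemma Finset.prod_filter_fst_lt_snd {ι M : Type*} [Fintype ι] [LinearOrder ι]
    [LocallyFiniteOrderTop ι] [CommMonoid M] (f : ι → ι → M) :
    ∏ p ∈ univ.filter (fun p : ι × ι => p.1 < p.2), f p.1 p.2 =
      ∏ i, ∏ j ∈ Ioi i, f i j := by
  rw [prod_filter, ← univ_product_univ, prod_product]
  refine prod_congr rfl fun i _ => ?_
  rw [← prod_filter]
  congr 1
  ext j
  simp

lemma natCast_prod_sub_eq_det_vandermonde {n : ℕ} {u : Fin n → ℕ} (hu : Monotone u) :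
    ((∏ p ∈ univ.filter (fun p : Fin n × Fin n => p.1 < p.2), (u p.2 - u p.1) : ℕ) : ℤ) =
      (Matrix.vandermonde fun i => (u i : ℤ)).det := by
  rw [Matrix.det_vandermonde, Nat.cast_prod,
    prod_filter_fst_lt_snd fun i j => ((u j - u i : ℕ) : ℤ)]
  refine prod_congr rfl fun i _ => prod_congr rfl fun j hj => ?_
  exact Nat.cast_sub (hu (mem_Ioi.mp hj).le)

/-- The superfactorial `1!·2!···(n-1)!` divides `∏_{i<j} (u_j - u_i)`. -/
theorem stmt_2 (n : ℕ) (u : Fin n → ℕ) (hu : StrictMono u) :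
    superfactorial (n - 1) ∣
      ∏ p ∈ Finset.univ.filter (fun p : Fin n × Fin n => p.1 < p.2),
        (u p.2 - u p.1) := by
  cases n with
  | zero => simp [superfactorial]
  | succ m =>
    rw [superfactorial_eq_superFactorial, ← Int.natCast_dvd_natCast,
      natCast_prod_sub_eq_det_vandermonde hu.monotone]
    exact Matrix.superFactorial_dvd_vandermonde_det _
end

section
/- Let U, L be finite sets of natural numbers, C = U ∩ L, Ū = U \ C, L̄ = L \ C. Then P(U,U)·P(L,L) = P(Ū,Ū) · P(L̄,L̄) · P(Ū ∪ L̄, C) · P(C, Ū ∪ L̄) · P(C,C)². -/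
open Finset

lemma Pprod_union_left {A B : Finset ℕ} (h : Disjoint A B) (C : Finset ℕ) :
    Pprod (A ∪ B) C = Pprod A C * Pprod B C := by
  rw [Pprod, union_product, filter_union,
    prod_union (disjoint_filter_filter (disjoint_product.2 (.inl h)))]
  rfl

lemma Pprod_union_right {A B : Finset ℕ} (h : Disjoint A B) (C : Finset ℕ) :
    Pprod C (A ∪ B) = Pprod C A * Pprod C B := by
  rw [Pprod, product_union, filter_union,
    prod_union (disjoint_filter_filter (disjoint_product.2 (.inr h)))]
  rfl

lemma Pprod_union_self {A B : Finset ℕ} (h : Disjoint A B) :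
    Pprod (A ∪ B) (A ∪ B) = Pprod A A * Pprod A B * Pprod B A * Pprod B B := by
  rw [Pprod_union_left h, Pprod_union_right h, Pprod_union_right h, ← mul_assoc]

/-- Factorization of `P(U,U)·P(L,L)` with `C = U ∩ L`. -/
theorem stmt_6 (U L : Finset ℕ) :
    Pprod U U * Pprod L L =
      Pprod (U \ (U ∩ L)) (U \ (U ∩ L)) * Pprod (L \ (U ∩ L)) (L \ (U ∩ L)) *
        Pprod ((U \ (U ∩ L)) ∪ (L \ (U ∩ L))) (U ∩ L) *
        Pprod (U ∩ L) ((U \ (U ∩ L)) ∪ (L \ (U ∩ L))) *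
        Pprod (U ∩ L) (U ∩ L) ^ 2 := by
  set C := U ∩ L
  have hUL : Disjoint (U \ C) (L \ C) := by
    rw [sdiff_inter_self_left, sdiff_inter_self_right]
    exact disjoint_sdiff_sdiff
  have hU : U = (U \ C) ∪ C := (sdiff_union_of_subset inter_subset_left).symm
  have hL : L = (L \ C) ∪ C := (sdiff_union_of_subset inter_subset_right).symm
  conv_lhs => rw [hU, hL]
  rw [Pprod_union_self sdiff_disjoint, Pprod_union_self sdiff_disjoint,
    Pprod_union_left hUL, Pprod_union_right hUL]
  ring
end
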